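/- Let K be an algebraically closed field and F = K(x). Let S be a finite-dimensional K-subspace of F of dimension n, let v be one of the valuations v_α (α ∈ K) or v_∞, and let S_1 ⊂ … ⊂ S_n be the natural filtration of S with respect to v, with combinatorial genii γ_i. Suppose γ_n ≥ 1, and let t be the least index with γ_t = γ_n (equivalently, since the γ_i are nondecreasing, the largest index with γ_t > γ_{t−1}). Then K(S_t) = K(S). -/

import Mathlib

open Polynomial

noncomputable section

namespace FFF

variable {K : Type*} [Field K] [IsAlgClosed K]

/-- Valuation of a rational function at the finite place `x - α`
(order of vanishing at `x - α`). -/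
def vA (α : K) (f : RatFunc K) : ℤ :=
  (Polynomial.rootMultiplicity α f.num : ℤ) - (Polynomial.rootMultiplicity α f.denom : ℤ)

/-- Valuation of a rational function at the place at infinity:
`deg (denominator) - deg (numerator)`. -/
def vInf (f : RatFunc K) : ℤ := -f.intDegree

/-- The places of `K(x)`: `some α` is the finite place at `α ∈ K`, `none` is the
place at infinity; `plval p` is the associated valuation. -/
def plval (p : Option K) (f : RatFunc K) : ℤ :=
  Option.elim p (vInf f) (fun α => vA α f)

/-- The degree of a rational function, `deg f = -v∞(f)`. -/
def fdeg (f : RatFunc K) : ℤ := f.intDegree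

/-- A divisor on `K(x)`: an integer for every place, zero for all but finitely many. -/
abbrev Divisor (K : Type*) [Field K] := Option K →₀ ℤ

/-- The degree of a divisor: the sum of its values. -/
def divDeg (D : Divisor K) : ℤ := D.sum fun _ n => n

/-- The Riemann–Roch space `L(D)` of a divisor `D`. -/
def RRset (D : Divisor K) : Set (RatFunc K) :=
  {f | f = 0 ∨ ∀ p : Option K, -(D p) ≤ plval p f}

/-- The subfield `K(T)` of `K(x)` generated by the constants `K` and a set `T`. -/
def Kgen (T : Set (RatFunc K)) : Subfield (RatFunc K) :=
  Subfield.closure ((Set.range fun a : K => (RatFunc.C a : RatFunc K)) ∪ T)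

/-- The combinatorial genus `γ = dim S² - 2 dim S + 1` of a subspace `S`. -/
def cgenus (S : Submodule K (RatFunc K)) : ℤ :=
  (Module.finrank K ↥(S * S) : ℤ) - 2 * (Module.finrank K ↥S : ℤ) + 1

/-- `sfil e i` is the `i`-th step (1-indexed) of the natural filtration attached to a
filtered basis `e`: the span of the first `i` basis vectors. -/
def sfil {n : ℕ} (e : Fin n → RatFunc K) (i : ℕ) : Submodule K (RatFunc K) :=
  Submodule.span K (e '' {j | (j : ℕ) < i})

/-- `e` is a filtered basis of `S` with respect to the valuation `v`:
a basis of `S` with strictly decreasing valuations. -/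
def IsFilteredBasis {n : ℕ} (v : RatFunc K → ℤ) (S : Submodule K (RatFunc K))
    (e : Fin n → RatFunc K) : Prop :=
  LinearIndependent K e ∧ Submodule.span K (Set.range e) = S ∧
    StrictAnti fun i => v (e i)

/-- `D` is the divisor of least degree with `S ⊆ L(D)`, i.e.
`D(P) = -min {v_P s : s ∈ S, s ≠ 0}` for every place `P`. -/
def IsMinDivisor (S : Submodule K (RatFunc K)) (D : Divisor K) : Prop :=
  ∀ p : Option K, IsLeast {d : ℤ | ∃ s ∈ S, s ≠ 0 ∧ plval p s = d} (-(D p))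

/-!
Let `v(e₀) > v(e₁) > ⋯` be the filtered basis, so that `S_i` is spanned by `e₀, …, e_{i-1}`.
Every element of `S_{i+1}²` has valuation at least `2 v(eᵢ)`, whereas `e_{i+1} eᵢ` and `e_{i+1}²`
have the strictly smaller, distinct valuations `v(e_{i+1}) + v(eᵢ) > 2 v(e_{i+1})`. Hence
`dim S_{i+2}² ≥ dim S_{i+1}² + 2`, i.e. the genus is nondecreasing, and when the genus does not
grow, `S_{i+2}² = S_{i+1}² ⊕ ⟨e_{i+1} eᵢ, e_{i+1}²⟩`. In that case, for `i ≥ 1`, the product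
`e_{i+1} e₀` has valuation above `v(e_{i+1} eᵢ)`, so it already lies in `S_{i+1}²`, and
`e_{i+1} = (e_{i+1} e₀) / e₀ ∈ K(S_{i+1})`. Since `γ₁ = 0 < γₙ`, every step between `t` and `n`
is of this kind.
-/

end FFF

namespace AddValuation

variable {k L Γ : Type*} [Field k] [Ring L] [Algebra k L] [LinearOrderedAddCommMonoidWithTop Γ]
  {v : AddValuation L Γ} [Valuation.IsTrivialOn k v]

lemma map_algebraMap_of_ne_zero {a : k} (ha : a ≠ 0) : v (algebraMap k L a) = 0 :=
  ‹Valuation.IsTrivialOn k v›.eq_one a ha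

lemma map_smul_of_ne_zero {a : k} (ha : a ≠ 0) (x : L) : v (a • x) = v x := by
  rw [Algebra.smul_def, v.map_mul, map_algebraMap_of_ne_zero ha, zero_add]

lemma le_map_smul (a : k) (x : L) : v x ≤ v (a • x) := by
  rcases eq_or_ne a 0 with rfl | ha
  · simp
  · rw [map_smul_of_ne_zero ha]

lemma le_map_of_mem_span {G : Set L} {c : Γ} (hG : ∀ g ∈ G, c ≤ v g) {x : L}
    (hx : x ∈ Submodule.span k G) : c ≤ v x := by
  induction hx using Submodule.span_induction with
  | mem x hx => exact hG x hx
  | zero => simp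
  | add x y _ _ hx hy => exact v.map_le_add hx hy
  | smul a x _ hx => exact hx.trans (le_map_smul a x)

variable {W : Submodule k L} {c : Γ} {u : L}

lemma le_map_of_mem_sup_span_singleton (hW : ∀ y ∈ W, c ≤ v y) (hu : v u ≤ c) :
    ∀ x ∈ W ⊔ Submodule.span k {u}, v u ≤ v x := by
  intro x hx
  obtain ⟨y, hy, z, hz, rfl⟩ := Submodule.mem_sup.mp hx
  obtain ⟨a, rfl⟩ := Submodule.mem_span_singleton.mp hz
  exact v.map_le_add (hu.trans (hW y hy)) (le_map_smul a u)

lemma mem_of_mem_sup_span_singleton (hW : ∀ y ∈ W, c ≤ v y) (hu : v u < c) {x : L}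
    (hx : x ∈ W ⊔ Submodule.span k {u}) (hux : v u < v x) : x ∈ W := by
  obtain ⟨y, hy, z, hz, rfl⟩ := Submodule.mem_sup.mp hx
  obtain ⟨a, rfl⟩ := Submodule.mem_span_singleton.mp hz
  rcases eq_or_ne a 0 with rfl | ha
  · simpa using hy
  · have hlt : v (a • u) < v y := by
      rw [map_smul_of_ne_zero ha]
      exact hu.trans_le (hW y hy)
    rw [v.map_add_eq_of_lt_right hlt, map_smul_of_ne_zero ha] at hux
    exact absurd hux (lt_irrefl _)

variable {u₁ u₂ : L}

lemma finrank_add_two_le_finrank_sup_span [FiniteDimensional k W] (hW : ∀ y ∈ W, c ≤ v y)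
    (h₁ : v u₁ < c) (h₂ : v u₂ < v u₁) :
    Module.finrank k W + 2 ≤
      Module.finrank k ↥(W ⊔ Submodule.span k {u₁} ⊔ Submodule.span k {u₂}) := by
  have hW₁ := le_map_of_mem_sup_span_singleton hW h₁.le
  have lt₁ : Module.finrank k W < Module.finrank k ↥(W ⊔ Submodule.span k {u₁}) :=
    Submodule.finrank_lt_finrank_of_lt
      (Submodule.lt_sup_iff_notMem.mpr fun h => (h₁.trans_le (hW _ h)).false)
  have lt₂ : Module.finrank k ↥(W ⊔ Submodule.span k {u₁}) <
      Module.finrank k ↥(W ⊔ Submodule.span k {u₁} ⊔ Submodule.span k {u₂}) :=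
    Submodule.finrank_lt_finrank_of_lt
      (Submodule.lt_sup_iff_notMem.mpr fun h => (h₂.trans_le (hW₁ _ h)).false)
  omega

lemma mem_of_mem_sup_span (hW : ∀ y ∈ W, c ≤ v y) (h₁ : v u₁ < c) (h₂ : v u₂ < v u₁) {x : L}
    (hx : x ∈ W ⊔ Submodule.span k {u₁} ⊔ Submodule.span k {u₂}) (hx₁ : v u₁ < v x) : x ∈ W :=
  mem_of_mem_sup_span_singleton hW h₁
    (mem_of_mem_sup_span_singleton (le_map_of_mem_sup_span_singleton hW h₁.le) h₂ hx
      (h₂.trans hx₁)) hx₁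

end AddValuation

lemma AddValuation.map_mul_lt_map_mul_left {L : Type*} [Field L] {v : AddValuation L (WithTop ℤ)}
    {x y z : L} (hx : x ≠ 0) (h : v y < v z) : v (x * y) < v (x * z) := by
  rw [v.map_mul, v.map_mul]
  exact WithTop.add_lt_add_left (v.ne_top_iff.mpr hx) h

lemma AddValuation.map_mul_lt_map_mul_right {L : Type*} [Field L] {v : AddValuation L (WithTop ℤ)}
    {x y z : L} (hx : x ≠ 0) (h : v y < v z) : v (y * x) < v (z * x) := by
  rw [mul_comm y, mul_comm z]
  exact v.map_mul_lt_map_mul_left hx h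

instance Submodule.finiteDimensional_mul {k L : Type*} [Field k] [Ring L] [Algebra k L]
    (M N : Submodule k L) [FiniteDimensional k M] [FiniteDimensional k N] :
    FiniteDimensional k ↥(M * N) :=
  Module.Finite.iff_fg.mpr ((Module.Finite.iff_fg.mp ‹_›).mul (Module.Finite.iff_fg.mp ‹_›))

namespace IntermediateField

variable {k L : Type*} [Field k] [Field L] [Algebra k L] {V : Submodule k L}

lemma mul_self_le_adjoin : V * V ≤ (adjoin k (V : Set L)).toSubalgebra.toSubmodule :=
  Submodule.mul_le.mpr fun _ hx _ hy =>
    (adjoin k _).mul_mem (subset_adjoin k _ hx) (subset_adjoin k _ hy)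

lemma mem_adjoin_of_mul_mem_mul_self {x w : L} (hxw : x * w ∈ V * V) (hw : w ∈ V) (hw0 : w ≠ 0) :
    x ∈ adjoin k (V : Set L) := by
  simpa [hw0] using (adjoin k _).div_mem (mul_self_le_adjoin hxw) (subset_adjoin k _ hw)

lemma adjoin_sup_span_singleton_of_mem {x : L} (hx : x ∈ adjoin k (V : Set L)) :
    adjoin k ((V ⊔ Submodule.span k {x} : Submodule k L) : Set L) = adjoin k (V : Set L) := by
  refine le_antisymm (adjoin_le_iff.mpr ?_)
    (adjoin.mono _ _ _ (SetLike.coe_subset_coe.mpr le_sup_left))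
  change V ⊔ Submodule.span k {x} ≤ (adjoin k (V : Set L)).toSubalgebra.toSubmodule
  exact sup_le (subset_adjoin k _) ((Submodule.span_singleton_le_iff_mem _ _).mpr hx)

end IntermediateField

namespace FFF

open IntermediateField

variable {K : Type*} [Field K]

lemma Kgen_eq_adjoin (T : Set (RatFunc K)) :
    Kgen T = (adjoin K T).toSubfield := by
  rw [adjoin_toSubfield, RatFunc.algebraMap_eq_C]
  rfl

lemma vA_eq_of_num_mul_eq {f : RatFunc K} (hf : f ≠ 0) {P Q : K[X]} (hP : P ≠ 0) (hQ : Q ≠ 0)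
    (h : f.num * Q = P * f.denom) (α : K) :
    vA α f = (rootMultiplicity α P : ℤ) - rootMultiplicity α Q := by
  have h' := congrArg (rootMultiplicity α) h
  rw [rootMultiplicity_mul (mul_ne_zero (RatFunc.num_ne_zero hf) hQ),
    rootMultiplicity_mul (mul_ne_zero hP f.denom_ne_zero)] at h'
  unfold vA
  omega

lemma vA_mul (α : K) {f g : RatFunc K} (hf : f ≠ 0) (hg : g ≠ 0) :
    vA α (f * g) = vA α f + vA α g := by
  have hnum := mul_ne_zero (RatFunc.num_ne_zero hf) (RatFunc.num_ne_zero hg)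
  rw [vA_eq_of_num_mul_eq (mul_ne_zero hf hg) hnum (mul_ne_zero f.denom_ne_zero g.denom_ne_zero)
    (RatFunc.num_denom_mul f g), rootMultiplicity_mul hnum,
    rootMultiplicity_mul (mul_ne_zero f.denom_ne_zero g.denom_ne_zero)]
  unfold vA
  omega

lemma min_vA_le_vA_add (α : K) {f g : RatFunc K} (hf : f ≠ 0) (hg : g ≠ 0) (hfg : f + g ≠ 0) :
    min (vA α f) (vA α g) ≤ vA α (f + g) := by
  have hnum := RatFunc.num_mul_denom_add_denom_mul_num_ne_zero hfg
  have hadd := rootMultiplicity_add α hnum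
  rw [vA_eq_of_num_mul_eq hfg hnum (mul_ne_zero f.denom_ne_zero g.denom_ne_zero)
    (RatFunc.num_denom_add f g), rootMultiplicity_mul (mul_ne_zero f.denom_ne_zero g.denom_ne_zero)]
  rw [rootMultiplicity_mul (mul_ne_zero (RatFunc.num_ne_zero hf) g.denom_ne_zero),
    rootMultiplicity_mul (mul_ne_zero f.denom_ne_zero (RatFunc.num_ne_zero hg))] at hadd
  unfold vA
  omega

lemma plval_mul (p : Option K) {f g : RatFunc K} (hf : f ≠ 0) (hg : g ≠ 0) :
    plval p (f * g) = plval p f + plval p g := by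
  cases p with
  | none => simp only [plval, Option.elim, vInf, RatFunc.intDegree_mul hf hg]; ring
  | some α => exact vA_mul α hf hg

lemma min_plval_le_plval_add (p : Option K) {f g : RatFunc K} (hf : f ≠ 0) (hg : g ≠ 0)
    (hfg : f + g ≠ 0) : min (plval p f) (plval p g) ≤ plval p (f + g) := by
  cases p with
  | none =>
    simp only [plval, Option.elim, vInf]
    have := RatFunc.intDegree_add_le hg hfg
    omega
  | some α => exact min_vA_le_vA_add α hf hg hfg

lemma plval_C (p : Option K) (a : K) : plval p (RatFunc.C a) = 0 := by
  cases p <;> simp [plval, vA, vInf]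

open scoped Classical in
def placeVal (p : Option K) : AddValuation (RatFunc K) (WithTop ℤ) :=
  AddValuation.of (fun f => if f = 0 then ⊤ else (plval p f : WithTop ℤ)) (if_pos rfl)
    (by simpa using plval_C p 1)
    (fun f g => by
      rcases eq_or_ne f 0 with rfl | hf
      · simp
      rcases eq_or_ne g 0 with rfl | hg
      · simp
      rcases eq_or_ne (f + g) 0 with hfg | hfg
      · simp [hfg]
      simp only [hf, hg, hfg, if_false, ← WithTop.coe_min, WithTop.coe_le_coe]
      exact min_plval_le_plval_add p hf hg hfg)
    (fun f g => by
      rcases eq_or_ne f 0 with rfl | hf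
      · simp
      rcases eq_or_ne g 0 with rfl | hg
      · simp
      simp [hf, hg, plval_mul p hf hg])

lemma placeVal_of_ne_zero (p : Option K) {f : RatFunc K} (hf : f ≠ 0) :
    placeVal p f = plval p f := by
  simp [placeVal, hf]

lemma placeVal_algebraMap (p : Option K) {a : K} (ha : a ≠ 0) :
    placeVal p (algebraMap K (RatFunc K) a) = 0 := by
  rw [RatFunc.algebraMap_eq_C, placeVal_of_ne_zero p (by simpa using ha), plval_C]
  rfl

instance (p : Option K) : Valuation.IsTrivialOn K (placeVal p) where
  eq_one _ ha := placeVal_algebraMap p ha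

section Filtration

variable {n : ℕ} {e : Fin n → RatFunc K}

instance (i : ℕ) : FiniteDimensional K (sfil e i) :=
  FiniteDimensional.span_of_finite K (Set.toFinite _)

lemma mem_sfil {k : Fin n} {i : ℕ} (hk : (k : ℕ) < i) : e k ∈ sfil e i :=
  Submodule.subset_span ⟨k, hk, rfl⟩

lemma sfil_mono {i i' : ℕ} (h : i ≤ i') : sfil e i ≤ sfil e i' :=
  Submodule.span_mono (Set.image_mono fun _ hk => lt_of_lt_of_le hk h)

lemma sfil_succ {i : ℕ} (hi : i < n) :
    sfil e (i + 1) = sfil e i ⊔ Submodule.span K {e ⟨i, hi⟩} := by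
  have hset : {j : Fin n | (j : ℕ) < i + 1} = insert ⟨i, hi⟩ {j : Fin n | (j : ℕ) < i} := by
    ext j
    simp only [Set.mem_ofPred_eq, Set.mem_insert_iff, Fin.ext_iff]
    omega
  rw [sfil, hset, Set.image_insert_eq, Set.insert_eq, Submodule.span_union, sup_comm, sfil]

lemma sfil_of_le {i : ℕ} (hi : n ≤ i) : sfil e i = Submodule.span K (Set.range e) := by
  have hset : {j : Fin n | (j : ℕ) < i} = Set.univ := Set.eq_univ_of_forall fun j => j.2.trans_le hi
  rw [sfil, hset, Set.image_univ]

lemma finrank_sfil (hli : LinearIndependent K e) {i : ℕ} (hi : i ≤ n) :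
    Module.finrank K (sfil e i) = i := by
  have hrange : Set.range (e ∘ Fin.castLE hi) = e '' {j | (j : ℕ) < i} := by
    ext x
    constructor
    · rintro ⟨j, rfl⟩
      exact ⟨Fin.castLE hi j, j.isLt, rfl⟩
    · rintro ⟨j, hj, rfl⟩
      exact ⟨⟨(j : ℕ), hj⟩, rfl⟩
  rw [sfil, ← hrange, finrank_span_eq_card (hli.comp _ (Fin.castLE_injective hi)),
    Fintype.card_fin]

variable {v : AddValuation (RatFunc K) (WithTop ℤ)} [Valuation.IsTrivialOn K v]

lemma le_map_of_mem_sfil (hanti : StrictAnti fun j => v (e j)) (i : Fin n) :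
    ∀ x ∈ sfil e (i + 1), v (e i) ≤ v x := by
  refine fun x hx => v.le_map_of_mem_span ?_ hx
  rintro _ ⟨j, hj, rfl⟩
  exact hanti.antitone (Nat.lt_succ_iff.mp hj)

lemma le_map_of_mem_sfil_mul_self (hanti : StrictAnti fun j => v (e j)) (i : Fin n) :
    ∀ x ∈ sfil e (i + 1) * sfil e (i + 1), v (e i * e i) ≤ v x := fun _ hx =>
  Submodule.mul_induction_on hx
    (fun a ha b hb => by
      rw [v.map_mul, v.map_mul]
      exact add_le_add (le_map_of_mem_sfil hanti i _ ha) (le_map_of_mem_sfil hanti i _ hb))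
    (fun _ _ => v.map_le_add)

lemma sup_span_le_sfil_succ_mul_self {i j : Fin n} (hij : i ≤ j) :
    sfil e j * sfil e j ⊔ Submodule.span K {e j * e i} ⊔ Submodule.span K {e j * e j} ≤
      sfil e (j + 1) * sfil e (j + 1) := by
  have hle := sfil_mono (e := e) (Nat.le_succ j)
  refine sup_le (sup_le (mul_le_mul' hle hle) ?_) ?_ <;>
    rw [Submodule.span_singleton_le_iff_mem] <;>
    exact Submodule.mul_mem_mul (mem_sfil (Nat.lt_succ_self _)) (mem_sfil (by omega))

lemma finrank_sfil_mul_self_add_two_le (hli : LinearIndependent K e)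
    (hanti : StrictAnti fun j => v (e j)) {i j : Fin n} (hij : (j : ℕ) = i + 1) :
    Module.finrank K ↥(sfil e j * sfil e j) + 2 ≤
      Module.finrank K ↥(sfil e (j + 1) * sfil e (j + 1)) := by
  have hlt : i < j := Fin.lt_def.mpr (by omega)
  refine (v.finrank_add_two_le_finrank_sup_span (hij ▸ le_map_of_mem_sfil_mul_self hanti i)
    (v.map_mul_lt_map_mul_right (hli.ne_zero i) (hanti hlt))
    (v.map_mul_lt_map_mul_left (hli.ne_zero j) (hanti hlt))).trans ?_
  exact Submodule.finrank_mono (sup_span_le_sfil_succ_mul_self hlt.le)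

lemma mul_mem_sfil_mul_self (hli : LinearIndependent K e) (hanti : StrictAnti fun j => v (e j))
    {i j : Fin n} (hij : (j : ℕ) = i + 1)
    (hle : Module.finrank K ↥(sfil e (j + 1) * sfil e (j + 1)) ≤
      Module.finrank K ↥(sfil e j * sfil e j) + 2)
    {k : Fin n} (hki : k < i) : e j * e k ∈ sfil e j * sfil e j := by
  have hlt : i < j := Fin.lt_def.mpr (by omega)
  have hT := hij ▸ le_map_of_mem_sfil_mul_self hanti i
  have h₁ := v.map_mul_lt_map_mul_right (hli.ne_zero i) (hanti hlt)
  have h₂ := v.map_mul_lt_map_mul_left (hli.ne_zero j) (hanti hlt)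
  have heq := Submodule.eq_of_le_of_finrank_le (sup_span_le_sfil_succ_mul_self (e := e) hlt.le)
    (hle.trans (v.finrank_add_two_le_finrank_sup_span hT h₁ h₂))
  refine v.mem_of_mem_sup_span hT h₁ h₂ ?_ (v.map_mul_lt_map_mul_left (hli.ne_zero j) (hanti hki))
  rw [heq]
  exact Submodule.mul_mem_mul (mem_sfil (Nat.lt_succ_self _)) (mem_sfil (by omega))

lemma cgenus_sfil_le_succ (hli : LinearIndependent K e) (hanti : StrictAnti fun j => v (e j))
    {i : ℕ} (hi : 1 ≤ i) : cgenus (sfil e i) ≤ cgenus (sfil e (i + 1)) := by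
  rcases lt_or_ge i n with hin | hni
  · have h := finrank_sfil_mul_self_add_two_le hli hanti (i := ⟨i - 1, by omega⟩) (j := ⟨i, hin⟩)
      (by simp only; omega)
    simp only [Fin.val_mk] at h
    simp only [cgenus, finrank_sfil hli hin.le, finrank_sfil hli hin]
    push_cast
    omega
  · rw [sfil_of_le hni, sfil_of_le (hni.trans (Nat.le_succ i))]

lemma adjoin_sfil_succ_of_cgenus_le (hli : LinearIndependent K e)
    (hanti : StrictAnti fun j => v (e j)) {i : ℕ} (hi : 2 ≤ i) (hin : i < n)
    (hγ : cgenus (sfil e (i + 1)) ≤ cgenus (sfil e i)) :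
    adjoin K (sfil e (i + 1) : Set (RatFunc K)) =
      adjoin K (sfil e i : Set (RatFunc K)) := by
  have hle : Module.finrank K ↥(sfil e (i + 1) * sfil e (i + 1)) ≤
      Module.finrank K ↥(sfil e i * sfil e i) + 2 := by
    simp only [cgenus, finrank_sfil hli hin.le, finrank_sfil hli hin] at hγ
    omega
  have hmem := mul_mem_sfil_mul_self hli hanti (i := ⟨i - 1, by omega⟩) (j := ⟨i, hin⟩)
    (by simp only; omega) hle (k := ⟨0, by omega⟩) (Fin.lt_def.mpr (by simp only; omega))
  rw [sfil_succ hin]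
  exact adjoin_sup_span_singleton_of_mem
    (mem_adjoin_of_mul_mem_mul_self hmem (mem_sfil (by simp only; omega))
      (hli.ne_zero _))

lemma cgenus_sfil_one_nonpos (hli : LinearIndependent K e) (hn : 0 < n) :
    cgenus (sfil e 1) ≤ 0 := by
  have hS₁ : sfil e 1 = Submodule.span K {e ⟨0, hn⟩} := by
    rw [show 1 = 0 + 1 from rfl, sfil_succ hn]
    simp [sfil]
  have hsq : Module.finrank K ↥(sfil e 1 * sfil e 1) ≤ 1 := by
    rw [hS₁, Submodule.span_mul_span, Set.singleton_mul_singleton]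
    exact (finrank_span_le_card _).trans (by simp)
  simp only [cgenus, finrank_sfil hli hn]
  omega

theorem adjoin_sfil_eq_of_cgenus_eq (hli : LinearIndependent K e)
    (hanti : StrictAnti fun j => v (e j)) {t : ℕ} (ht : 1 ≤ t) (htn : t ≤ n)
    (hγ : cgenus (sfil e t) = cgenus (sfil e n)) (hpos : 1 ≤ cgenus (sfil e n)) :
    adjoin K (sfil e t : Set (RatFunc K)) =
      adjoin K (sfil e n : Set (RatFunc K)) := by
  have hmono : MonotoneOn (fun i => cgenus (sfil e i)) {i | 1 ≤ i} :=
    monotoneOn_nat_Ici_of_le_succ fun i hi => cgenus_sfil_le_succ hli hanti hi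
  have hγ₁ := cgenus_sfil_one_nonpos hli (by omega)
  have hstep : ∀ i, t ≤ i → i < n → adjoin K (sfil e (i + 1) : Set (RatFunc K)) =
      adjoin K (sfil e i : Set (RatFunc K)) := by
    intro i hti hin
    have hγti : cgenus (sfil e t) ≤ cgenus (sfil e i) := hmono ht (ht.trans hti) hti
    have hγin : cgenus (sfil e (i + 1)) ≤ cgenus (sfil e n) :=
      hmono (Nat.le_add_left 1 i) (ht.trans htn) hin
    refine adjoin_sfil_succ_of_cgenus_le hli hanti ?_ hin (by omega)
    by_contra hi
    obtain rfl : i = 1 := by omega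
    omega
  suffices ∀ i, t ≤ i → i ≤ n → adjoin K (sfil e i : Set (RatFunc K)) =
      adjoin K (sfil e t : Set (RatFunc K)) from (this n htn le_rfl).symm
  intro i hti
  induction i, hti using Nat.le_induction with
  | base => exact fun _ => rfl
  | succ i hti ih => exact fun hin => (hstep i hti hin).trans (ih (by omega))

end Filtration

variable [IsAlgClosed K]

theorem statement5_general (n : ℕ) (S : Submodule K (RatFunc K))
    (p : Option K) (e : Fin n → RatFunc K)
    (hbasis : IsFilteredBasis (plval p) S e)
    (hgn : 1 ≤ cgenus (sfil e n))
    (t : ℕ)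
    (ht : IsLeast {i : ℕ | 1 ≤ i ∧ i ≤ n ∧ cgenus (sfil e i) = cgenus (sfil e n)} t) :
    Kgen ((sfil e t : Submodule K (RatFunc K)) : Set (RatFunc K)) = Kgen (S : Set (RatFunc K)) := by
  obtain ⟨hli, hspan, hanti⟩ := hbasis
  obtain ⟨⟨ht1, htn, hγ⟩, -⟩ := ht
  have hval : StrictAnti fun j => placeVal p (e j) := fun a b hab => by
    simpa only [placeVal_of_ne_zero p (hli.ne_zero _), WithTop.coe_lt_coe] using hanti hab
  have hS : sfil e n = S := (sfil_of_le le_rfl).trans hspan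
  rw [Kgen_eq_adjoin, Kgen_eq_adjoin, ← hS, adjoin_sfil_eq_of_cgenus_eq hli hval ht1 htn hγ hgn]

/-- If `γₙ ≥ 1` and `t` is the least index with `γ_t = γ_n`, then
`K(S_t) = K(S)`. -/
theorem statement5 (n : ℕ) (S : Submodule K (RatFunc K))
    (hdim : Module.finrank K ↥S = n)
    (p : Option K) (e : Fin n → RatFunc K)
    (hbasis : IsFilteredBasis (plval p) S e)
    (hgn : 1 ≤ cgenus (sfil e n))
    (t : ℕ)
    (ht : IsLeast {i : ℕ | 1 ≤ i ∧ i ≤ n ∧ cgenus (sfil e i) = cgenus (sfil e n)} t) :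
    Kgen ((sfil e t : Submodule K (RatFunc K)) : Set (RatFunc K)) = Kgen (S : Set (RatFunc K)) :=
  statement5_general n S p e hbasis hgn t ht

end FFF
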